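/- arXiv:2205.15641 — 3 statements merged into one kernel-verified Lean document; each statement's English description precedes it below -/
import Mathlib

section
/- Let H be a Hopf algebra over a commutative ring k and (δ, σ) a modular pair in involution, i.e. δ : H → k is a character, σ ∈ H is grouplike with δ(σ) = 1, and the twisted antipode S̃(h) = δ(h₍₁₎) S(h₍₂₎) satisfies S̃(S̃(h)) = σ · h · S(σ) for all h ∈ H. Then the operator τ₁(h) = S̃(h)·σ satisfies the cocyclicity condition τ₁² = id, i.e. τ₁(τ₁(h)) = h for all h ∈ H. -/
/-!
Like `S`, the twisted antipode `S̃ = δ ⋆ S` reverses products, and on a grouplike `σ` with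
`δ σ = 1` it is `S σ = σ⁻¹`. Hence `S̃(S̃ h * σ) * σ = σ⁻¹ * S̃(S̃ h) * σ`, which the
involution condition `S̃² = Ad σ` turns into `h`.
-/

open TensorProduct Coalgebra HopfAlgebra

variable {k H : Type*} [CommRing k] [Ring H] [HopfAlgebra k H]

/-- The `δ`-twisted antipode `S̃(h) = δ(h₍₁₎) • S(h₍₂₎)`. -/
noncomputable def twistedAntipode (δ : H →ₐ[k] k) : H →ₗ[k] H :=
  (TensorProduct.lid k H).toLinearMap ∘ₗ
    TensorProduct.map δ.toLinearMap (antipode (R := k)) ∘ₗ Coalgebra.comul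

section TwistedAntipode

variable (δ : H →ₐ[k] k)

lemma twistedAntipode_apply {a : H} {ι : Type*} (ℛa : Coalgebra.Repr k a ι) :
    twistedAntipode δ a = ∑ i ∈ ℛa.index, δ (ℛa.left i) • antipode k (ℛa.right i) := by
  simp [twistedAntipode, ← ℛa.eq, map_sum]

lemma twistedAntipode_mul_antidistrib (a b : H) :
    twistedAntipode δ (a * b) = twistedAntipode δ b * twistedAntipode δ a := by
  rw [twistedAntipode_apply δ ((ℛ k a).mul (ℛ k b)), twistedAntipode_apply δ (ℛ k a),
    twistedAntipode_apply δ (ℛ k b), Finset.sum_mul_sum, Finset.sum_comm]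
  simp only [Coalgebra.Repr.mul_index, Coalgebra.Repr.mul_left, Coalgebra.Repr.mul_right,
    Finset.sum_product, map_mul, antipode_mul_antidistrib, smul_mul_smul_comm, mul_comm]

lemma twistedAntipode_of_isGroupLikeElem {σ : H} (hσ : IsGroupLikeElem k σ) :
    twistedAntipode δ σ = δ σ • antipode k σ := by
  simp [twistedAntipode, hσ.comul_eq_tmul_self]

end TwistedAntipode

/-- a modular pair in involution yields τ₁² = id. -/
theorem tau1_involutive (δ : H →ₐ[k] k) (σ : H)
    (hΔ : Coalgebra.comul (R := k) σ = σ ⊗ₜ[k] σ)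
    (hε : Coalgebra.counit (R := k) σ = (1 : k))
    (hδσ : δ σ = 1)
    (hMPI : ∀ h : H, twistedAntipode δ (twistedAntipode δ h) =
      σ * h * antipode (R := k) σ) :
    ∀ h : H, twistedAntipode δ (twistedAntipode δ h * σ) * σ = h := by
  intro h
  have hσ : IsGroupLikeElem k σ := ⟨hε, hΔ⟩
  calc twistedAntipode δ (twistedAntipode δ h * σ) * σ
      = antipode k σ * (σ * h * antipode k σ) * σ := by
        rw [twistedAntipode_mul_antidistrib, twistedAntipode_of_isGroupLikeElem δ hσ, hδσ,
          one_smul, hMPI]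
    _ = (antipode k σ * σ) * h * (antipode k σ * σ) := by simp only [mul_assoc]
    _ = h := by rw [hσ.antipode_mul_cancel, one_mul, mul_one]
end

section
/- Let H be a Hopf algebra over a commutative ring k, (δ, σ) a modular pair, and S̃(h) = δ(h₍₁₎) S(h₍₂₎). Then for all h ∈ H: S̃(h₍₁₎)₍₁₎·h₍₂₎ ⊗ S̃(h₍₁₎)₍₂₎·σ = 1 ⊗ S̃(h)·σ in H ⊗ H. (This is the paracyclic relation τ₂ ∘ δ₁ = δ₀ ∘ τ₁ of the Connes–Moscovici construction.) -/
/-!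
Work in the convolution algebra of linear maps `H → H ⊗ H`, with `ι₁ x = x ⊗ 1` and
`ι₂ x = 1 ⊗ x`. Up to right multiplication of the second factor by `σ`, `τ₂ ∘ Δ` is the
convolution product `(Δ ∘ S̃) * ι₁`. Since `ι₁ * ι₂ = Δ`, `ι₂ * (ι₂ ∘ S) = 1` and `S̃ = δ * S`,
`(Δ ∘ S̃) * ι₁ = (Δ ∘ S̃) * Δ * (ι₂ ∘ S) = Δ ∘ (S̃ * id) * (ι₂ ∘ S) = δ * (ι₂ ∘ S) = ι₂ ∘ S̃`.
-/

open TensorProduct Coalgebra HopfAlgebra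

variable {k H : Type*} [CommRing k] [Ring H] [HopfAlgebra k H]

/-- The degree-2 Connes–Moscovici paracocyclic operator
τ₂(g ⊗ h) = S̃(g)₍₁₎·h ⊗ S̃(g)₍₂₎·σ. -/
noncomputable def tau2 (δ : H →ₐ[k] k) (σ : H) : H ⊗[k] H →ₗ[k] H ⊗[k] H :=
  TensorProduct.map (LinearMap.mul' k H) (LinearMap.mulRight k σ) ∘ₗ
    (TensorProduct.assoc k H H H).symm.toLinearMap ∘ₗ
    LinearMap.lTensor H (TensorProduct.comm k H H).toLinearMap ∘ₗ
    (TensorProduct.assoc k H H H).toLinearMap ∘ₗ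
    LinearMap.rTensor H (Coalgebra.comul ∘ₗ twistedAntipode δ)

open WithConv Algebra.TensorProduct

section Bialgebra

variable {R A B : Type*} [CommSemiring R] [Semiring A] [Semiring B] [Algebra R B]

lemma includeLeft_convMul_includeRight [Bialgebra R A] :
    toConv (includeLeft : A →ₐ[R] A ⊗[R] A).toLinearMap *
      toConv (includeRight : A →ₐ[R] A ⊗[R] A).toLinearMap = toConv (comul (R := R) (A := A)) := by
  ext a
  rw [(ℛ R a).convMul_apply, ← (ℛ R a).eq]
  simp [tmul_mul_tmul]

lemma AlgHom.toConv_convMul_comp_antipode [HopfAlgebra R A] (φ : A →ₐ[R] B) :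
    toConv φ.toLinearMap * toConv (φ.toLinearMap ∘ₗ antipode R) = 1 := by
  have h := LinearMap.algHom_comp_convMul_distrib φ (toConv .id) (toConv (antipode R))
  simp only [LinearMap.comp_id, LinearMap.id_mul_antipode] at h
  apply ofConv_injective
  rw [← h]
  ext a
  simp [LinearMap.convOne_def]

end Bialgebra

lemma twistedAntipode_eq_convMul (δ : H →ₐ[k] k) :
    toConv (twistedAntipode δ) =
      toConv (Algebra.linearMap k H ∘ₗ δ.toLinearMap) * toConv (antipode k) := by
  ext h
  rw [(ℛ k h).convMul_apply, twistedAntipode, LinearMap.comp_apply, LinearMap.comp_apply,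
    ← (ℛ k h).eq]
  simp [Algebra.smul_def]

lemma twistedAntipode_convMul_id (δ : H →ₐ[k] k) :
    toConv (twistedAntipode δ) * toConv .id = toConv (Algebra.linearMap k H ∘ₗ δ.toLinearMap) := by
  rw [twistedAntipode_eq_convMul, mul_assoc, LinearMap.antipode_mul_id, mul_one]

lemma comul_twistedAntipode_convMul_comul (δ : H →ₐ[k] k) :
    toConv (comul ∘ₗ twistedAntipode δ) * toConv comul =
      toConv (Algebra.linearMap k (H ⊗[k] H) ∘ₗ δ.toLinearMap) := by
  have h := LinearMap.algHom_comp_convMul_distrib (Bialgebra.comulAlgHom k H)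
    (toConv (twistedAntipode δ)) (toConv .id)
  rw [twistedAntipode_convMul_id] at h
  simp only [LinearMap.comp_id, Bialgebra.toLinearMap_comulAlgHom] at h
  apply ofConv_injective
  rw [← h]
  ext a
  simp

lemma comul_twistedAntipode_convMul_includeLeft (δ : H →ₐ[k] k) :
    toConv (comul ∘ₗ twistedAntipode δ) * toConv (includeLeft : H →ₐ[k] H ⊗[k] H).toLinearMap =
      toConv ((includeRight : H →ₐ[k] H ⊗[k] H).toLinearMap ∘ₗ twistedAntipode δ) := by
  set ι₁ := (includeLeft : H →ₐ[k] H ⊗[k] H).toLinearMap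
  set ι₂ := (includeRight : H →ₐ[k] H ⊗[k] H)
  calc toConv (comul ∘ₗ twistedAntipode δ) * toConv ι₁
      = toConv (comul ∘ₗ twistedAntipode δ) * toConv ι₁ *
          (toConv ι₂.toLinearMap * toConv (ι₂.toLinearMap ∘ₗ antipode k)) := by
        rw [ι₂.toConv_convMul_comp_antipode, mul_one]
    _ = toConv (comul ∘ₗ twistedAntipode δ) * toConv comul *
          toConv (ι₂.toLinearMap ∘ₗ antipode k) := by
        rw [← includeLeft_convMul_includeRight, mul_assoc, mul_assoc, mul_assoc]
    _ = toConv (ι₂.toLinearMap ∘ₗ Algebra.linearMap k H ∘ₗ δ.toLinearMap) *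
          toConv (ι₂.toLinearMap ∘ₗ antipode k) := by
        rw [comul_twistedAntipode_convMul_comul]
        congr 2
        ext a
        simp
    _ = toConv (ι₂.toLinearMap ∘ₗ twistedAntipode δ) := by
        rw [← ofConv_toConv (twistedAntipode δ), twistedAntipode_eq_convMul,
          LinearMap.algHom_comp_convMul_distrib]

lemma tau2_eq (δ : H →ₐ[k] k) (σ : H) :
    tau2 δ σ = LinearMap.lTensor H (LinearMap.mulRight k σ) ∘ₗ LinearMap.mul' k (H ⊗[k] H) ∘ₗ
      TensorProduct.map (comul ∘ₗ twistedAntipode δ)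
        (includeLeft : H →ₐ[k] H ⊗[k] H).toLinearMap := by
  refine TensorProduct.ext' fun a b => ?_
  simp only [tau2, LinearMap.comp_apply, LinearMap.rTensor_tmul, TensorProduct.map_tmul]
  induction comul (R := k) (twistedAntipode δ a) using TensorProduct.induction_on with
  | zero => simp
  | tmul x y => simp [tmul_mul_tmul]
  | add x y hx hy => simp_all [TensorProduct.add_tmul]

theorem tau2_coface1_general (δ : H →ₐ[k] k) (σ : H) (h : H) :
    tau2 δ σ (Coalgebra.comul (R := k) h) =
      (1 : H) ⊗ₜ[k] (twistedAntipode δ h * σ) := by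
  calc tau2 δ σ (comul h)
      = LinearMap.lTensor H (LinearMap.mulRight k σ) ((toConv (comul ∘ₗ twistedAntipode δ) *
          toConv (includeLeft : H →ₐ[k] H ⊗[k] H).toLinearMap) h) := by
        rw [tau2_eq]
        rfl
    _ = (1 : H) ⊗ₜ[k] (twistedAntipode δ h * σ) := by
        rw [comul_twistedAntipode_convMul_includeLeft]
        simp

/-- τ₂ ∘ δ₁ = δ₀ ∘ τ₁, i.e. τ₂(Δ(h)) = 1 ⊗ S̃(h)·σ. -/
theorem tau2_coface1 (δ : H →ₐ[k] k) (σ : H)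
    (hΔ : Coalgebra.comul (R := k) σ = σ ⊗ₜ[k] σ)
    (hε : Coalgebra.counit (R := k) σ = (1 : k))
    (hδσ : δ σ = 1) (h : H) :
    tau2 δ σ (Coalgebra.comul (R := k) h) =
      (1 : H) ⊗ₜ[k] (twistedAntipode δ h * σ) :=
  tau2_coface1_general δ σ h
end

section
/- Let H be a Hopf algebra over a commutative ring k, δ : H → k a character, σ ∈ H a grouplike element with δ(σ) = 1, and let C be a right H-module coalgebra: a k-coalgebra with a right H-action such that Δ_C(c·h) = c₍₁₎·h₍₁₎ ⊗ c₍₂₎·h₍₂₎ and ε_C(c·h) = ε_C(c)·ε_H(h). Suppose α ∈ C is a δ-invariant σ-trace, i.e. α·h = δ(h)·α for all h ∈ H and α₍₁₎ ⊗ α₍₂₎·σ = α₍₂₎ ⊗ α₍₁₎ in C ⊗ C. Then for all h ∈ H: α₍₁₎ ⊗ α₍₂₎·(S̃(h)·σ) = α₍₂₎·h ⊗ α₍₁₎, where S̃(h) = δ(h₍₁₎) S(h₍₂₎). (This is the compatibility of the Connes–Moscovici trace with the degree-1 cyclic operators.) -/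
open TensorProduct Coalgebra HopfAlgebra

variable {k H : Type*} [CommRing k] [Ring H] [HopfAlgebra k H]

section Aux

variable {k : Type*} [CommRing k] {C : Type*} [AddCommGroup C] [Module k C]

lemma aux_map_eq_lTensor_rTensor (f g : C →ₗ[k] C) (t : C ⊗[k] C) :
    TensorProduct.map f g t = LinearMap.lTensor C g (LinearMap.rTensor C f t) := by
  induction t using TensorProduct.induction_on with
  | zero => simp
  | tmul u v => simp
  | add x y hx hy => simp [hx, hy]

lemma aux_map_id_lTensor (f g : C →ₗ[k] C) (t : C ⊗[k] C) :
    TensorProduct.map f LinearMap.id (LinearMap.lTensor C g t) = TensorProduct.map f g t := by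
  induction t using TensorProduct.induction_on with
  | zero => simp
  | tmul u v => simp
  | add x y hx hy => simp [hx, hy]

lemma aux_map_id_comm (f : C →ₗ[k] C) (t : C ⊗[k] C) :
    TensorProduct.map f LinearMap.id ((TensorProduct.comm k C C) t) =
      (TensorProduct.comm k C C) (LinearMap.lTensor C f t) := by
  induction t using TensorProduct.induction_on with
  | zero => simp
  | tmul u v => simp
  | add x y hx hy => simp [hx, hy]

end Aux

set_option maxHeartbeats 1000000 in
set_option synthInstance.maxHeartbeats 200000 in
/-- the Connes–Moscovici trace compatibility in degree 1.
Here `C` is a right `H`-module coalgebra via the bilinear action `r`,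
and `α` is a `δ`-invariant `σ`-trace. -/
theorem trace_tau1_compat {C : Type*} [AddCommGroup C] [Module k C] [Coalgebra k C]
    (r : C →ₗ[k] H →ₗ[k] C)
    -- right H-module axioms
    (hact : ∀ (c : C) (g h : H), r (r c g) h = r c (g * h))
    (hone : ∀ c : C, r c 1 = c)
    -- Δ_C is H-linear: Δ_C(c·h) = c₍₁₎·h₍₁₎ ⊗ c₍₂₎·h₍₂₎
    (hcomul : ∀ (c : C) (h : H),
      Coalgebra.comul (R := k) (r c h) =
        TensorProduct.map (TensorProduct.lift r) (TensorProduct.lift r)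
          ((TensorProduct.tensorTensorTensorComm k C C H H)
            (Coalgebra.comul (R := k) c ⊗ₜ[k] Coalgebra.comul (R := k) h)))
    -- ε_C is H-linear: ε_C(c·h) = ε_C(c) ε_H(h)
    (hcounit : ∀ (c : C) (h : H),
      Coalgebra.counit (R := k) (r c h) =
        Coalgebra.counit (R := k) c * Coalgebra.counit (R := k) h)
    (δ : H →ₐ[k] k) (σ : H)
    (hΔσ : Coalgebra.comul (R := k) σ = σ ⊗ₜ[k] σ)
    (hεσ : Coalgebra.counit (R := k) σ = (1 : k))
    (hδσ : δ σ = 1)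
    (α : C)
    -- δ-invariance: α·h = δ(h)•α
    (hinv : ∀ h : H, r α h = δ h • α)
    -- σ-trace: α₍₁₎ ⊗ α₍₂₎·σ = α₍₂₎ ⊗ α₍₁₎
    (htr : LinearMap.lTensor C (r.flip σ) (Coalgebra.comul (R := k) α) =
      (TensorProduct.comm k C C) (Coalgebra.comul (R := k) α)) :
    ∀ h : H,
      LinearMap.lTensor C (r.flip (twistedAntipode δ h * σ))
          (Coalgebra.comul (R := k) α) =
        (TensorProduct.comm k C C)
          (LinearMap.lTensor C (r.flip h) (Coalgebra.comul (R := k) α)) := by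
  intro h
  set Δα := Coalgebra.comul (R := k) α with hΔα
  set ρ := TensorProduct.lift r with hρ
  set ttt := TensorProduct.tensorTensorTensorComm k C C H H with httt
  -- the big auxiliary map F : H ⊗ (H ⊗ H) →ₗ C ⊗ C,
  -- F (x ⊗ (y ⊗ z)) = α₍₁₎·x ⊗ α₍₂₎·(y * S z)
  set F : H ⊗[k] (H ⊗[k] H) →ₗ[k] C ⊗[k] C :=
    (TensorProduct.map ρ ρ) ∘ₗ ttt.toLinearMap ∘ₗ
      (TensorProduct.mk k (C ⊗[k] C) (H ⊗[k] H) Δα) ∘ₗ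
      LinearMap.lTensor H
        ((LinearMap.mul' k H) ∘ₗ LinearMap.lTensor H (antipode (R := k))) with hF
  -- the "invariance of comultiplication" identity:
  -- Ψ x := α₍₁₎·x₍₁₎ ⊗ α₍₂₎·x₍₂₎ = δ x • Δα
  have hΨ : ∀ x : H,
      TensorProduct.map ρ ρ (ttt (Δα ⊗ₜ[k] Coalgebra.comul (R := k) x)) = δ x • Δα := by
    intro x
    rw [← hcomul α x, hinv x, map_smul]
  -- sub-claim c1b
  have c1b : ∀ (w : C ⊗[k] C) (a m y' : H),
      TensorProduct.map ρ ρ (ttt (w ⊗ₜ[k] (a ⊗ₜ[k] (m * y')))) =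
        LinearMap.lTensor C (r.flip y')
          (TensorProduct.map ρ ρ (ttt (w ⊗ₜ[k] (a ⊗ₜ[k] m)))) := by
    intro w a m y'
    induction w using TensorProduct.induction_on with
    | zero => simp
    | tmul u v => simp [httt, hρ, hact]
    | add x y hx hy =>
        simp only [add_tmul, map_add, hx, hy]
  -- sub-claim c2b
  have c2b : ∀ (w : C ⊗[k] C) (x : H),
      TensorProduct.map ρ ρ (ttt (w ⊗ₜ[k] (x ⊗ₜ[k] (1 : H)))) =
        LinearMap.rTensor C (r.flip x) w := by
    intro w x
    induction w using TensorProduct.induction_on with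
    | zero => simp
    | tmul u v => simp [httt, hρ, hone]
    | add a b ha hb => simp only [add_tmul, map_add, ha, hb]
  -- claim c1a : F (assoc (u ⊗ y)) = lTensor (r.flip (S y)) (map ρ ρ (ttt (Δα ⊗ u)))
  have c1a : ∀ (u : H ⊗[k] H) (y : H),
      F ((TensorProduct.assoc k H H H) (u ⊗ₜ[k] y)) =
        LinearMap.lTensor C (r.flip ((antipode (R := k)) y))
          (TensorProduct.map ρ ρ (ttt (Δα ⊗ₜ[k] u))) := by
    intro u y
    induction u using TensorProduct.induction_on with
    | zero =>
        rw [TensorProduct.zero_tmul, TensorProduct.tmul_zero]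
        simp
    | tmul a b =>
        simp only [TensorProduct.assoc_tmul, hF, LinearMap.comp_apply,
          LinearMap.lTensor_tmul, TensorProduct.mk_apply, LinearEquiv.coe_coe,
          LinearMap.mul'_apply]
        exact c1b Δα a b _
    | add x z hx hz =>
        simp only [add_tmul, map_add, hx, hz, TensorProduct.tmul_add]
  -- claim c1
  have c1 : ∀ t : H ⊗[k] H,
      LinearMap.lTensor C
          (r.flip ((TensorProduct.lid k H)
            (TensorProduct.map δ.toLinearMap (antipode (R := k)) t))) Δα =
        F ((TensorProduct.assoc k H H H)
          ((Coalgebra.comul (R := k)).rTensor H t)) := by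
    intro t
    induction t using TensorProduct.induction_on with
    | zero => simp
    | tmul x y =>
        rw [LinearMap.rTensor_tmul, c1a (Coalgebra.comul (R := k) x) y, hΨ x]
        simp only [TensorProduct.map_tmul, TensorProduct.lid_tmul,
          AlgHom.toLinearMap_apply, map_smul, LinearMap.lTensor_smul,
          LinearMap.smul_apply]
    | add x y hx hy =>
        simp only [map_add, LinearMap.lTensor_add, LinearMap.add_apply, hx, hy]
  -- claim c2
  have c2 : ∀ t : H ⊗[k] H,
      F ((Coalgebra.comul (R := k)).lTensor H t) =
        LinearMap.rTensor C
          (r.flip ((TensorProduct.rid k H) ((Coalgebra.counit (R := k)).lTensor H t))) Δα := by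
    intro t
    induction t using TensorProduct.induction_on with
    | zero => simp
    | tmul x y =>
        have hmul : (LinearMap.mul' k H)
            ((LinearMap.lTensor H (antipode (R := k))) (Coalgebra.comul (R := k) y)) =
            (Algebra.linearMap k H) (Coalgebra.counit (R := k) y) := by
          simpa using mul_antipode_lTensor_comul_apply (R := k) y
        simp only [LinearMap.lTensor_tmul, hF, LinearMap.comp_apply,
          TensorProduct.mk_apply, LinearEquiv.coe_coe]
        rw [hmul, Algebra.linearMap_apply, Algebra.algebraMap_eq_smul_one,
          TensorProduct.tmul_smul, TensorProduct.tmul_smul, map_smul, map_smul,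
          c2b Δα x, TensorProduct.rid_tmul]
        simp only [map_smul, LinearMap.rTensor_smul, LinearMap.smul_apply]
    | add x y hx hy =>
        simp only [map_add, LinearMap.rTensor_add, LinearMap.add_apply, hx, hy]
  -- the key "dagger" identity: α₍₁₎ ⊗ α₍₂₎·S̃(h) = α₍₁₎·h ⊗ α₍₂₎
  have dagger :
      LinearMap.lTensor C (r.flip (twistedAntipode δ h)) Δα =
        LinearMap.rTensor C (r.flip h) Δα := by
    have h1 := c1 (Coalgebra.comul (R := k) h)
    have h2 := c2 (Coalgebra.comul (R := k) h)
    rw [Coalgebra.coassoc_apply (R := k) h] at h1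
    rw [Coalgebra.lTensor_counit_comul (R := k) h] at h2
    simp only [TensorProduct.rid_tmul, one_smul] at h2
    have : twistedAntipode δ h =
        (TensorProduct.lid k H)
          (TensorProduct.map δ.toLinearMap (antipode (R := k)) (Coalgebra.comul (R := k) h)) := by
      rfl
    rw [this, h1, h2]
  -- factoring the action of a product through two actions
  have hfactor : ∀ (m : H) (t : C ⊗[k] C),
      LinearMap.lTensor C (r.flip (m * σ)) t =
        LinearMap.lTensor C (r.flip σ) (LinearMap.lTensor C (r.flip m) t) := by
    intro m t
    induction t using TensorProduct.induction_on with
    | zero => simp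
    | tmul u v => simp [hact]
    | add x y hx hy => simp only [map_add, hx, hy]
  -- the σ-trace property with an extra action on the first leg
  have keyσ : TensorProduct.map (r.flip h) (r.flip σ) Δα =
      (TensorProduct.comm k C C) (LinearMap.lTensor C (r.flip h) Δα) := by
    rw [← aux_map_id_lTensor (r.flip h) (r.flip σ) Δα, htr, aux_map_id_comm]
  calc LinearMap.lTensor C (r.flip (twistedAntipode δ h * σ)) Δα
      = LinearMap.lTensor C (r.flip σ)
          (LinearMap.lTensor C (r.flip (twistedAntipode δ h)) Δα) := hfactor _ _
    _ = LinearMap.lTensor C (r.flip σ) (LinearMap.rTensor C (r.flip h) Δα) := by rw [dagger]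
    _ = TensorProduct.map (r.flip h) (r.flip σ) Δα :=
        (aux_map_eq_lTensor_rTensor (r.flip h) (r.flip σ) Δα).symm
    _ = (TensorProduct.comm k C C) (LinearMap.lTensor C (r.flip h) Δα) := keyσ
end
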